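/- arXiv:2311.18235 — 12 statements merged into one kernel-verified Lean document; each statement's English description precedes it below -/
import Mathlib

section
/- Let (λ_i)_{i=1}^N and (θ_i)_{i=1}^N be two finite sequences of real numbers such that λ_i ≤ λ_{i+1} for all i, θ_i ≥ 0 for all i, and Θ = max_i θ_i. Let k = ⌊(∑_{i=1}^N θ_i)/Θ⌋. If ∑_{i=1}^k λ_i ≥ 0, then ∑_{i=1}^N λ_i θ_i ≥ 0. -/
open Finset

theorem weighted_sum_nonneg
    (N : ℕ) (hN : 0 < N) (lam θ : ℕ → ℝ)
    (hmono : ∀ i j, i < N → j < N → i ≤ j → lam i ≤ lam j)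
    (hθ : ∀ i, i < N → 0 ≤ θ i)
    (Θ : ℝ) (hΘpos : 0 < Θ)
    (hΘub : ∀ i, i < N → θ i ≤ Θ)
    (hΘmem : ∃ i, i < N ∧ θ i = Θ)
    (k : ℕ) (hk : k = ⌊(∑ i ∈ range N, θ i) / Θ⌋₊)
    (hk1 : 1 ≤ k) (hkN : k ≤ N)
    (hpos : 0 ≤ ∑ i ∈ range k, lam i) :
    0 ≤ ∑ i ∈ range N, lam i * θ i := by
  set S := ∑ i ∈ range N, θ i with hS
  have hS0 : 0 ≤ S := Finset.sum_nonneg (fun i hi => hθ i (mem_range.mp hi))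
  have hkS : (k : ℝ) * Θ ≤ S := by
    have h1 : (k : ℝ) ≤ S / Θ := by
      rw [hk]; exact Nat.floor_le (by positivity)
    calc (k:ℝ) * Θ ≤ (S/Θ) * Θ := by nlinarith
    _ = S := by field_simp
  set c := lam (k-1) with hcdef
  have hkm : k - 1 < N := lt_of_lt_of_le (by omega) hkN
  have hc : 0 ≤ c := by
    by_contra h
    push_neg at h
    have hle : ∑ i ∈ range k, lam i ≤ ∑ i ∈ range k, c :=
      Finset.sum_le_sum (fun i hi =>
        hmono i (k-1) (lt_of_lt_of_le (mem_range.mp hi) hkN) hkm (by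
          have := mem_range.mp hi; omega))
    rw [Finset.sum_const, Finset.card_range, nsmul_eq_mul] at hle
    have hk0 : (0:ℝ) < (k:ℝ) := by exact_mod_cast hk1
    nlinarith [hpos]
  have hsplit : ∑ i ∈ range N, lam i * θ i
      = ∑ i ∈ range N, (lam i - c) * θ i + c * S := by
    rw [hS, Finset.mul_sum, ← Finset.sum_add_distrib]
    exact Finset.sum_congr rfl (fun i _ => by ring)
  rw [hsplit]
  rw [← Finset.sum_range_add_sum_Ico (fun i => (lam i - c) * θ i) hkN]
  have h2 : 0 ≤ ∑ i ∈ Ico k N, (lam i - c) * θ i := by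
    apply Finset.sum_nonneg
    intro i hi
    obtain ⟨h1i, h2i⟩ := mem_Ico.mp hi
    have hlc : c ≤ lam i := hmono (k-1) i hkm h2i (by omega)
    have hθi := hθ i h2i
    nlinarith
  have h1 : ∑ i ∈ range k, (lam i - c) * Θ ≤ ∑ i ∈ range k, (lam i - c) * θ i := by
    apply Finset.sum_le_sum
    intro i hi
    have hiN : i < N := lt_of_lt_of_le (mem_range.mp hi) hkN
    have hle : lam i ≤ c := hmono i (k-1) hiN hkm (by
      have := mem_range.mp hi; omega)
    have := hΘub i hiN
    nlinarith
  have h3 : ∑ i ∈ range k, (lam i - c) * Θ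
      = (∑ i ∈ range k, lam i) * Θ - (k:ℝ) * c * Θ := by
    rw [← Finset.sum_mul, Finset.sum_sub_distrib, Finset.sum_const, Finset.card_range,
      nsmul_eq_mul]
    ring
  nlinarith [mul_nonneg hc (sub_nonneg.mpr hkS), mul_nonneg hpos hΘpos.le]
end

section
/- Let n ≥ 4 be an integer and let a_1,...,a_n be real numbers with ∑_i a_i = 0 and ∑_i a_i² = 1. Then for any indices i, j, k, l (with possible coincidences restricted to the patterns: all four distinct; or i=k with i,j,l distinct; or i=k, j=l, i≠j), the quantity (a_i + a_j + a_k + a_l)² is at most 8(n-2)/n. -/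
open Finset

lemma key_lemma (n : ℕ) (hn : 0 < n) (a c : Fin n → ℝ)
    (hsum : ∑ i, a i = 0) (hnorm : ∑ i, (a i) ^ 2 = 1)
    (hc4 : ∑ x, c x = 4) (hc8 : ∑ x, (c x) ^ 2 ≤ 8) :
    (∑ x, c x * a x) ^ 2 ≤ 8 * ((n : ℝ) - 2) / n := by
  have hn0 : (n : ℝ) ≠ 0 := Nat.cast_ne_zero.mpr hn.ne'
  set b : Fin n → ℝ := fun x => c x - 4 / n with hb
  have h1 : ∑ x, b x * a x = ∑ x, c x * a x := by
    simp [hb, sub_mul, Finset.sum_sub_distrib, ← Finset.mul_sum, hsum]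
  have h2 : ∑ x, (b x) ^ 2 = ∑ x, (c x) ^ 2 - 16 / n := by
    have : ∀ x, (b x) ^ 2 = (c x) ^ 2 - (8 / n) * c x + 16 / n ^ 2 := by
      intro x; simp [hb]; ring
    rw [Finset.sum_congr rfl fun x _ => this x]
    rw [Finset.sum_add_distrib, Finset.sum_sub_distrib, ← Finset.mul_sum, hc4]
    simp [Finset.card_univ]
    field_simp
    ring
  have CS := Finset.sum_mul_sq_le_sq_mul_sq Finset.univ b a
  rw [hnorm, mul_one, h1, h2] at CS
  have : (8 : ℝ) - 16 / n = 8 * ((n : ℝ) - 2) / n := by field_simp; ring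
  linarith

theorem four_index_sum_sq_le
    (n : ℕ) (hn : 4 ≤ n) (a : Fin n → ℝ)
    (hsum : ∑ i, a i = 0) (hnorm : ∑ i, (a i) ^ 2 = 1)
    (i j k l : Fin n)
    (hpattern :
      (i ≠ j ∧ i ≠ k ∧ i ≠ l ∧ j ≠ k ∧ j ≠ l ∧ k ≠ l) ∨
      (i = k ∧ i ≠ j ∧ i ≠ l ∧ j ≠ l) ∨
      (i = k ∧ j = l ∧ i ≠ j)) :
    (a i + a j + a k + a l) ^ 2 ≤ 8 * ((n : ℝ) - 2) / n := by
  have hn0 : 0 < n := by omega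
  rcases hpattern with ⟨h1,h2,h3,h4,h5,h6⟩ | ⟨h1,h2,h3,h4⟩ | ⟨h1,h2,h3⟩
  · -- all distinct
    set c : Fin n → ℝ := fun x =>
      (if x = i then 1 else 0) + (if x = j then 1 else 0) +
      (if x = k then 1 else 0) + (if x = l then 1 else 0) with hc
    have hca : ∑ x, c x * a x = a i + a j + a k + a l := by
      simp [hc, add_mul, Finset.sum_add_distrib, ite_mul, Finset.sum_ite_eq']
    have hc4 : ∑ x, c x = 4 := by
      simp [hc, Finset.sum_add_distrib, Finset.sum_ite_eq']; norm_num
    have hcsq : ∀ x, (c x) ^ 2 = c x := by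
      intro x
      simp only [hc]
      by_cases e1 : x = i <;> by_cases e2 : x = j <;> by_cases e3 : x = k <;>
        by_cases e4 : x = l <;> simp_all <;> norm_num
    have hc8 : ∑ x, (c x) ^ 2 ≤ 8 := by
      rw [Finset.sum_congr rfl fun x _ => hcsq x, hc4]; norm_num
    have := key_lemma n hn0 a c hsum hnorm hc4 hc8
    rwa [hca] at this
  · -- i = k
    subst h1
    set c : Fin n → ℝ := fun x =>
      2 * (if x = i then 1 else 0) + (if x = j then 1 else 0) + (if x = l then 1 else 0) with hc
    have hca : ∑ x, c x * a x = a i + a j + a i + a l := by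
      simp [hc, add_mul, mul_assoc, Finset.sum_add_distrib, ite_mul, Finset.sum_ite_eq',
        ← Finset.mul_sum]
      ring
    have hc4 : ∑ x, c x = 4 := by
      simp [hc, Finset.sum_add_distrib, Finset.sum_ite_eq', ← Finset.mul_sum]; norm_num
    have hcsq : ∀ x, (c x) ^ 2 =
        4 * (if x = i then 1 else 0) + (if x = j then 1 else 0) + (if x = l then 1 else 0) := by
      intro x
      simp only [hc]
      by_cases e1 : x = i <;> by_cases e2 : x = j <;> by_cases e3 : x = l <;>
        simp_all <;> norm_num
    have hc8 : ∑ x, (c x) ^ 2 ≤ 8 := by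
      rw [Finset.sum_congr rfl fun x _ => hcsq x]
      simp [Finset.sum_add_distrib, Finset.sum_ite_eq', ← Finset.mul_sum]; norm_num
    have := key_lemma n hn0 a c hsum hnorm hc4 hc8
    rwa [hca] at this
  · -- i = k, j = l
    subst h1; subst h2
    set c : Fin n → ℝ := fun x =>
      2 * (if x = i then 1 else 0) + 2 * (if x = j then 1 else 0) with hc
    have hca : ∑ x, c x * a x = a i + a j + a i + a j := by
      simp [hc, add_mul, mul_assoc, Finset.sum_add_distrib, ite_mul, Finset.sum_ite_eq',
        ← Finset.mul_sum]
      ring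
    have hc4 : ∑ x, c x = 4 := by
      simp [hc, Finset.sum_add_distrib, Finset.sum_ite_eq', ← Finset.mul_sum]; norm_num
    have hcsq : ∀ x, (c x) ^ 2 =
        4 * (if x = i then 1 else 0) + 4 * (if x = j then 1 else 0) := by
      intro x
      simp only [hc]
      by_cases e1 : x = i <;> by_cases e2 : x = j <;> simp_all <;> norm_num
    have hc8 : ∑ x, (c x) ^ 2 ≤ 8 := by
      rw [Finset.sum_congr rfl fun x _ => hcsq x]
      simp [Finset.sum_add_distrib, Finset.sum_ite_eq', ← Finset.mul_sum]; norm_num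
    have := key_lemma n hn0 a c hsum hnorm hc4 hc8
    rwa [hca] at this
end

section
/- Let n ≥ 4 and let a_1,...,a_n be real numbers with ∑ a_i = 0 and ∑ a_i² = 1. If i, j, k, l are four pairwise distinct indices, then (a_i + a_j + a_k + a_l)² ≤ 4(n-4)/n. -/
open Finset

theorem four_distinct_sum_sq_le
    (n : ℕ) (hn : 4 ≤ n) (a : Fin n → ℝ)
    (hsum : ∑ i, a i = 0) (hnorm : ∑ i, (a i) ^ 2 = 1)
    (i j k l : Fin n)
    (hd : i ≠ j ∧ i ≠ k ∧ i ≠ l ∧ j ≠ k ∧ j ≠ l ∧ k ≠ l) :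
    (a i + a j + a k + a l) ^ 2 ≤ 4 * ((n : ℝ) - 4) / n := by
  obtain ⟨hij, hik, hil, hjk, hjl, hkl⟩ := hd
  set s : Finset (Fin n) := {i, j, k, l} with hs
  have hcard : s.card = 4 := by
    rw [hs]
    rw [card_insert_of_notMem (by simp [hij, hik, hil]),
      card_insert_of_notMem (by simp [hjk, hjl]),
      card_insert_of_notMem (by simp [hkl]), card_singleton]
  have hS : ∑ x ∈ s, a x = a i + a j + a k + a l := by
    rw [hs, sum_insert (by simp [hij, hik, hil]), sum_insert (by simp [hjk, hjl]),
      sum_insert (by simp [hkl]), sum_singleton]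
    ring
  set S := a i + a j + a k + a l with hSdef
  have hcardc : sᶜ.card = n - 4 := by
    rw [card_compl, hcard, Fintype.card_fin]
  have hsplit : ∑ x ∈ s, a x + ∑ x ∈ sᶜ, a x = 0 := by
    rw [Finset.sum_add_sum_compl]; exact hsum
  have hSc : ∑ x ∈ sᶜ, a x = -S := by
    rw [hS] at hsplit; linarith
  have hsplit2 : ∑ x ∈ s, (a x) ^ 2 + ∑ x ∈ sᶜ, (a x) ^ 2 = 1 := by
    rw [Finset.sum_add_sum_compl]; exact hnorm
  have h1 : S ^ 2 ≤ 4 * ∑ x ∈ s, (a x) ^ 2 := by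
    have := sq_sum_le_card_mul_sum_sq (s := s) (f := a)
    rw [hcard, hS] at this
    push_cast at this
    linarith
  have h2 : S ^ 2 ≤ ((n : ℝ) - 4) * ∑ x ∈ sᶜ, (a x) ^ 2 := by
    have := sq_sum_le_card_mul_sum_sq (s := sᶜ) (f := a)
    rw [hcardc, hSc] at this
    have hcast : ((n - 4 : ℕ) : ℝ) = (n : ℝ) - 4 := by
      have : (4 : ℕ) ≤ n := hn
      push_cast [Nat.cast_sub this]; ring
    rw [neg_pow] at this
    simp at this
    rw [hcast] at this
    linarith
  have hn0 : (0 : ℝ) < n := by positivity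
  have hn4 : (0 : ℝ) ≤ (n : ℝ) - 4 := by
    have : (4 : ℝ) ≤ n := by exact_mod_cast hn
    linarith
  rw [le_div_iff₀ hn0]
  have key : (n : ℝ) * S ^ 2 ≤ 4 * ((n : ℝ) - 4) * (∑ x ∈ s, (a x) ^ 2 + ∑ x ∈ sᶜ, (a x) ^ 2) := by
    nlinarith [sq_nonneg S]
  rw [hsplit2] at key
  linarith
end

section
/- Let n ≥ 3 and let a_1,...,a_n be real numbers with ∑ a_i = 0 and ∑ a_i² = 1. If i ≠ j, then (2a_i + 2a_j)² ≤ 8(n-2)/n. -/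
open Finset

theorem two_index_sum_sq_le
    (n : ℕ) (hn : 3 ≤ n) (a : Fin n → ℝ)
    (hsum : ∑ i, a i = 0) (hnorm : ∑ i, (a i) ^ 2 = 1)
    (i j : Fin n) (hij : i ≠ j) :
    (2 * a i + 2 * a j) ^ 2 ≤ 8 * ((n : ℝ) - 2) / n := by
  set s : Finset (Fin n) := univ \ {i, j} with hs
  have hij' : ({i, j} : Finset (Fin n)) ⊆ univ := subset_univ _
  have hcard : (s.card : ℝ) = (n : ℝ) - 2 := by
    have h2 : ({i, j} : Finset (Fin n)).card = 2 := by
      rw [card_insert_of_notMem (by simpa using hij), card_singleton]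
    have : s.card = n - 2 := by
      rw [hs, card_sdiff_of_subset hij', card_univ, Fintype.card_fin, h2]
    rw [this]
    have : 2 ≤ n := by omega
    push_cast [Nat.cast_sub this]
    ring
  have hsumS : ∑ k ∈ s, a k = -(a i + a j) := by
    have := sum_sdiff_eq_sub (f := a) hij'
    rw [hs, this, hsum, sum_pair hij]
    ring
  have hnormS : ∑ k ∈ s, (a k) ^ 2 = 1 - (a i) ^ 2 - (a j) ^ 2 := by
    have := sum_sdiff_eq_sub (f := fun k => (a k) ^ 2) hij'
    rw [hs, this, hnorm, sum_pair hij]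
    ring
  have hcs := sq_sum_le_card_mul_sum_sq (s := s) (f := a)
  rw [hsumS, hnormS] at hcs
  have hcs' : (a i + a j) ^ 2 ≤ ((n : ℝ) - 2) * (1 - (a i) ^ 2 - (a j) ^ 2) := by
    calc (a i + a j) ^ 2 = (-(a i + a j)) ^ 2 := by ring
    _ ≤ (s.card : ℝ) * (1 - (a i) ^ 2 - (a j) ^ 2) := hcs
    _ = _ := by rw [hcard]
  have hn' : (3 : ℝ) ≤ n := by exact_mod_cast hn
  have hnpos : (0 : ℝ) < n := by linarith
  rw [le_div_iff₀ hnpos]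
  nlinarith [sq_nonneg (a i - a j), sq_nonneg (a i + a j)]
end

section
/- Let n ≥ 4 and let a_1,...,a_n be real numbers with ∑ a_i = 0 and ∑ a_i² = 1. If i, j, l are pairwise distinct, then (2a_i + a_j + a_l)² ≤ 2(3n-8)/n. -/
open Finset

theorem three_index_sum_sq_le
    (n : ℕ) (hn : 4 ≤ n) (a : Fin n → ℝ)
    (hsum : ∑ i, a i = 0) (hnorm : ∑ i, (a i) ^ 2 = 1)
    (i j l : Fin n) (hij : i ≠ j) (hil : i ≠ l) (hjl : j ≠ l) :
    (2 * a i + a j + a l) ^ 2 ≤ 2 * (3 * (n : ℝ) - 8) / n := by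
  have hn0 : (0:ℝ) < n := by
    have : (4:ℝ) ≤ n := by exact_mod_cast hn
    linarith
  set c : Fin n → ℝ := fun k =>
    (if k = i then 2 else 0) + (if k = j then 1 else 0) + (if k = l then 1 else 0) with hc
  have hsc : ∑ k, c k = 4 := by
    simp only [hc, Finset.sum_add_distrib, Finset.sum_ite_eq', Finset.mem_univ, if_true]
    norm_num
  have hsca : ∑ k, c k * a k = 2 * a i + a j + a l := by
    simp only [hc, add_mul, ite_mul, zero_mul, one_mul,
      Finset.sum_add_distrib, Finset.sum_ite_eq', Finset.mem_univ, if_true]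
    try ring
  have hptw : ∀ k, (c k) ^ 2 =
      (if k = i then 4 else 0) + (if k = j then 1 else 0) + (if k = l then 1 else 0) := by
    intro k
    simp only [hc]
    by_cases h1 : k = i <;> by_cases h2 : k = j <;> by_cases h3 : k = l <;>
      simp_all <;> ring
  have hsc2 : ∑ k, (c k) ^ 2 = 6 := by
    rw [Finset.sum_congr rfl fun k _ => hptw k]
    simp only [Finset.sum_add_distrib, Finset.sum_ite_eq', Finset.mem_univ, if_true]
    norm_num
  have key := Finset.sum_mul_sq_le_sq_mul_sq Finset.univ (fun k => c k - 4 / n) a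
  have h1 : ∑ k, (c k - 4 / n) * a k = 2 * a i + a j + a l := by
    rw [Finset.sum_congr rfl (fun k _ => by ring :
      ∀ k ∈ Finset.univ, (c k - 4 / n) * a k = c k * a k - (4 / n) * a k)]
    rw [Finset.sum_sub_distrib, ← Finset.mul_sum, hsum, hsca]
    ring
  have h2 : ∑ k, (c k - 4 / (n:ℝ)) ^ 2 = 6 - 16 / (n:ℝ) := by
    have e : ∀ k, (c k - 4 / (n:ℝ)) ^ 2
        = (c k) ^ 2 - (8 / (n:ℝ)) * c k + 16 / (n:ℝ)^2 := fun k => by ring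
    simp only [e]
    rw [Finset.sum_add_distrib, Finset.sum_sub_distrib, ← Finset.mul_sum, hsc2, hsc,
      Finset.sum_const, Finset.card_univ, Fintype.card_fin, nsmul_eq_mul]
    field_simp
    ring
  rw [h1, h2, hnorm, mul_one] at key
  have : 6 - 16 / (n:ℝ) = 2 * (3 * (n : ℝ) - 8) / n := by
    field_simp; ring
  linarith [key, this.symm ▸ key]
end

section
/- Let R and T be algebraic curvature tensors on an n-dimensional Euclidean vector space. Set α = ∑ R_{tpsq}T_{tpkl}T_{sqkl}. Then ∑ R_{tpsq}T_{tkpl}T_{skql} = α/4. -/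
open Finset

theorem curvature_contraction_quarter
    (n : ℕ) (R T : Fin n → Fin n → Fin n → Fin n → ℝ)
    (hRa : ∀ i j k l, R i j k l = - R j i k l)
    (hRb : ∀ i j k l, R i j k l = - R i j l k)
    (hRc : ∀ i j k l, R i j k l = R k l i j)
    (hRbianchi : ∀ i j k l, R i j k l + R j k i l + R k i j l = 0)
    (hTa : ∀ i j k l, T i j k l = - T j i k l)
    (hTb : ∀ i j k l, T i j k l = - T i j l k)
    (hTc : ∀ i j k l, T i j k l = T k l i j)
    (hTbianchi : ∀ i j k l, T i j k l + T j k i l + T k i j l = 0)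
    (α : ℝ)
    (hα : α = ∑ t, ∑ p, ∑ s, ∑ q, ∑ k, ∑ l, R t p s q * T t p k l * T s q k l) :
    (∑ t, ∑ p, ∑ s, ∑ q, ∑ k, ∑ l, R t p s q * T t k p l * T s k q l) = α / 4 := by
  have hT' : ∀ i j k l, T i j k l = T k j i l + T i k j l := by
    intro i j k l
    have h := hTbianchi i j k l
    have h1 := hTa j k i l
    have h2 := hTa k i j l
    linarith
  -- e1 : A = F + D
  have e1 : (∑ t, ∑ p, ∑ s, ∑ q, ∑ k, ∑ l, R t p s q * T t k p l * T s k q l)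
      = (∑ t, ∑ p, ∑ s, ∑ q, ∑ k, ∑ l, R t p s q * T p k t l * T s k q l)
      + (∑ t, ∑ p, ∑ s, ∑ q, ∑ k, ∑ l, R t p s q * T t p k l * T s k q l) := by
    simp only [← Finset.sum_add_distrib]
    refine Finset.sum_congr rfl fun t _ => Finset.sum_congr rfl fun p _ =>
      Finset.sum_congr rfl fun s _ => Finset.sum_congr rfl fun q _ =>
      Finset.sum_congr rfl fun k _ => Finset.sum_congr rfl fun l _ => ?_
    rw [hT' t k p l]; ring
  -- e2 : F = -A
  have e2 : (∑ t, ∑ p, ∑ s, ∑ q, ∑ k, ∑ l, R t p s q * T p k t l * T s k q l)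
      = ∑ t, ∑ p, ∑ s, ∑ q, ∑ k, ∑ l, (-(R t p s q * T t k p l * T s k q l)) := by
    rw [Finset.sum_comm]
    refine Finset.sum_congr rfl fun a _ => Finset.sum_congr rfl fun b _ =>
      Finset.sum_congr rfl fun s _ => Finset.sum_congr rfl fun q _ =>
      Finset.sum_congr rfl fun k _ => Finset.sum_congr rfl fun l _ => ?_
    rw [hRa b a s q]; ring
  have negA : (∑ t, ∑ p, ∑ s, ∑ q, ∑ k, ∑ l, (-(R t p s q * T t k p l * T s k q l)))
      = -(∑ t, ∑ p, ∑ s, ∑ q, ∑ k, ∑ l, R t p s q * T t k p l * T s k q l) := by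
    simp
  -- e3 : D = X + α
  have e3 : (∑ t, ∑ p, ∑ s, ∑ q, ∑ k, ∑ l, R t p s q * T t p k l * T s k q l)
      = (∑ t, ∑ p, ∑ s, ∑ q, ∑ k, ∑ l, R t p s q * T t p k l * T q k s l)
      + (∑ t, ∑ p, ∑ s, ∑ q, ∑ k, ∑ l, R t p s q * T t p k l * T s q k l) := by
    simp only [← Finset.sum_add_distrib]
    refine Finset.sum_congr rfl fun t _ => Finset.sum_congr rfl fun p _ =>
      Finset.sum_congr rfl fun s _ => Finset.sum_congr rfl fun q _ =>
      Finset.sum_congr rfl fun k _ => Finset.sum_congr rfl fun l _ => ?_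
    rw [hT' s k q l]; ring
  -- e4 : X = -D
  have e4 : (∑ t, ∑ p, ∑ s, ∑ q, ∑ k, ∑ l, R t p s q * T t p k l * T q k s l)
      = ∑ t, ∑ p, ∑ s, ∑ q, ∑ k, ∑ l, (-(R t p s q * T t p k l * T s k q l)) := by
    refine Finset.sum_congr rfl fun t _ => Finset.sum_congr rfl fun p _ => ?_
    rw [Finset.sum_comm]
    refine Finset.sum_congr rfl fun a _ => Finset.sum_congr rfl fun b _ =>
      Finset.sum_congr rfl fun k _ => Finset.sum_congr rfl fun l _ => ?_
    rw [hRb t p b a]; ring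
  have negD : (∑ t, ∑ p, ∑ s, ∑ q, ∑ k, ∑ l, (-(R t p s q * T t p k l * T s k q l)))
      = -(∑ t, ∑ p, ∑ s, ∑ q, ∑ k, ∑ l, R t p s q * T t p k l * T s k q l) := by
    simp
  linarith
end

section
/- Let R and T be algebraic curvature tensors on an n-dimensional Euclidean vector space. Set α = ∑ R_{tpsq}T_{tpkl}T_{sqkl} and β = ∑ R_{tspq}T_{tjpl}T_{sjql}. Then ∑ R_{pstq}T_{tjpl}T_{sjql} = -α/4 + β. -/
/-!
The first Bianchi identity for `R` gives `R_{pstq} = R_{tspq} - R_{tpsq}`, so the left-hand side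
is `β - γ` with `γ = ∑ R_{tpsq} T_{tkpl} T_{skql}`. The first Bianchi identity for `T`, in the form
`T_{abef} = T_{aebf} - T_{beaf}`, shows that contracting `T_{abef}` against any tensor
antisymmetric in `a, b` gives twice the contraction against `T_{aebf}`. Applying this to each of
the two `T` factors of `α` gives `α = 4γ`.
-/

open Finset

theorem sum_comm_pairs {ι κ M : Type*} [Fintype ι] [Fintype κ] [AddCommMonoid M]
    (g : ι → ι → κ → κ → M) :
    ∑ a, ∑ b, ∑ c, ∑ d, g a b c d = ∑ c, ∑ d, ∑ a, ∑ b, g a b c d := by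
  calc ∑ a, ∑ b, ∑ c, ∑ d, g a b c d
      = ∑ x : ι × ι, ∑ y : κ × κ, g x.1 x.2 y.1 y.2 := by simp only [Fintype.sum_prod_type]
    _ = ∑ y : κ × κ, ∑ x : ι × ι, g x.1 x.2 y.1 y.2 := sum_comm
    _ = ∑ c, ∑ d, ∑ a, ∑ b, g a b c d := by simp only [Fintype.sum_prod_type]

section

variable {ι 𝕜 : Type*} [Fintype ι] [CommRing 𝕜] {R T : ι → ι → ι → ι → 𝕜}

theorem sum_antisymm_mul_eq_two_mul_of_bianchi
    (hTa : ∀ i j k l, T i j k l = - T j i k l)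
    (hTbianchi : ∀ i j k l, T i j k l + T j k i l + T k i j l = 0)
    (K : ι → ι → 𝕜) (hK : ∀ a b, K a b = - K b a) (e f : ι) :
    ∑ a, ∑ b, K a b * T a b e f = 2 * ∑ a, ∑ b, K a b * T a e b f := by
  have hT : ∀ a b, T a b e f = T a e b f - T b e a f := fun a b => by
    linear_combination hTbianchi a b e f - hTa e a b f
  have hswap : ∑ a, ∑ b, K a b * T b e a f = - ∑ a, ∑ b, K a b * T a e b f := by
    rw [sum_comm, ← sum_neg_distrib]
    refine sum_congr rfl fun a _ => ?_
    rw [← sum_neg_distrib]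
    refine sum_congr rfl fun b _ => ?_
    rw [hK]; ring
  simp only [hT, mul_sub, sum_sub_distrib, hswap]
  ring

theorem sum4_antisymm_mul_eq_two_mul_of_bianchi
    (hTa : ∀ i j k l, T i j k l = - T j i k l)
    (hTbianchi : ∀ i j k l, T i j k l + T j k i l + T k i j l = 0)
    (K : ι → ι → ι → ι → 𝕜) (hK : ∀ a b e f, K a b e f = - K b a e f) :
    ∑ a, ∑ b, ∑ e, ∑ f, K a b e f * T a b e f
      = 2 * ∑ a, ∑ b, ∑ e, ∑ f, K a b e f * T a e b f := by
  rw [sum_comm_pairs, sum_comm_pairs (fun a b e f => K a b e f * T a e b f), mul_sum]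
  refine sum_congr rfl fun e _ => ?_
  rw [mul_sum]
  refine sum_congr rfl fun f _ => ?_
  exact sum_antisymm_mul_eq_two_mul_of_bianchi hTa hTbianchi _ (fun a b => hK a b e f) e f

theorem sum_mul_eq_sub_of_bianchi
    (hRa : ∀ i j k l, R i j k l = - R j i k l)
    (hRbianchi : ∀ i j k l, R i j k l + R j k i l + R k i j l = 0)
    (U : ι → ι → ι → ι → 𝕜) :
    ∑ p, ∑ s, ∑ t, ∑ q, R p s t q * U t p s q
      = ∑ t, ∑ s, ∑ p, ∑ q, R t s p q * U t p s q
        - ∑ t, ∑ p, ∑ s, ∑ q, R t p s q * U t p s q := by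
  have hR : ∀ p s t q, R p s t q * U t p s q = R t s p q * U t p s q - R t p s q * U t p s q :=
    fun p s t q => by linear_combination (hRbianchi p s t q - hRa s t p q) * U t p s q
  simp only [hR, sum_sub_distrib]
  refine congrArg₂ (· - ·) ?_ sum_comm_cycle
  rw [sum_comm_cycle]
  exact sum_congr rfl fun t _ => sum_comm

theorem sum_contraction_eq_four_mul_of_bianchi
    (hRa : ∀ i j k l, R i j k l = - R j i k l)
    (hRb : ∀ i j k l, R i j k l = - R i j l k)
    (hTa : ∀ i j k l, T i j k l = - T j i k l)
    (hTbianchi : ∀ i j k l, T i j k l + T j k i l + T k i j l = 0) :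
    ∑ t, ∑ p, ∑ s, ∑ q, ∑ k, ∑ l, R t p s q * T t p k l * T s q k l
      = 4 * ∑ t, ∑ p, ∑ s, ∑ q, ∑ k, ∑ l, R t p s q * T t k p l * T s k q l := by
  calc ∑ t, ∑ p, ∑ s, ∑ q, ∑ k, ∑ l, R t p s q * T t p k l * T s q k l
      = ∑ t, ∑ p, ∑ k, ∑ l, (∑ s, ∑ q, R t p s q * T s q k l) * T t p k l := by
        refine sum_congr rfl fun t _ => sum_congr rfl fun p _ => ?_
        rw [sum_comm_pairs]
        simp only [sum_mul]
        ac_rfl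
    _ = 2 * ∑ t, ∑ p, ∑ k, ∑ l, (∑ s, ∑ q, R t p s q * T s q k l) * T t k p l :=
        sum4_antisymm_mul_eq_two_mul_of_bianchi hTa hTbianchi _ fun t p k l => by
          simp only [hRa t p, neg_mul, sum_neg_distrib]
    _ = 2 * ∑ t, ∑ p, ∑ k, ∑ l, ∑ s, ∑ q, (R t p s q * T t k p l) * T s q k l := by
        simp only [sum_mul]
        ac_rfl
    _ = 2 * ∑ t, ∑ p, ∑ k, ∑ l, 2 * ∑ s, ∑ q, (R t p s q * T t k p l) * T s k q l := by
        refine congrArg (2 * ·) ?_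
        refine sum_congr rfl fun t _ => sum_congr rfl fun p _ => sum_congr rfl fun k _ =>
          sum_congr rfl fun l _ => ?_
        exact sum_antisymm_mul_eq_two_mul_of_bianchi hTa hTbianchi _
          (fun s q => by rw [hRb]; ring) k l
    _ = 4 * ∑ t, ∑ p, ∑ s, ∑ q, ∑ k, ∑ l, R t p s q * T t k p l * T s k q l := by
        simp only [← mul_sum]
        rw [← mul_assoc, show (2 : 𝕜) * 2 = 4 by norm_num]
        refine congrArg (4 * ·) ?_
        exact sum_congr rfl fun t _ => sum_congr rfl fun p _ =>
          sum_comm_pairs fun k l s q => R t p s q * T t k p l * T s k q l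

end

theorem curvature_contraction_beta_general
    (n : ℕ) (R T : Fin n → Fin n → Fin n → Fin n → ℝ)
    (hRa : ∀ i j k l, R i j k l = - R j i k l)
    (hRb : ∀ i j k l, R i j k l = - R i j l k)
    (hRbianchi : ∀ i j k l, R i j k l + R j k i l + R k i j l = 0)
    (hTa : ∀ i j k l, T i j k l = - T j i k l)
    (hTbianchi : ∀ i j k l, T i j k l + T j k i l + T k i j l = 0)
    (α β : ℝ)
    (hα : α = ∑ t, ∑ p, ∑ s, ∑ q, ∑ k, ∑ l, R t p s q * T t p k l * T s q k l)
    (hβ : β = ∑ t, ∑ s, ∑ p, ∑ q, ∑ j, ∑ l, R t s p q * T t j p l * T s j q l) :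
    (∑ p, ∑ s, ∑ t, ∑ q, ∑ j, ∑ l, R p s t q * T t j p l * T s j q l) = - α / 4 + β := by
  have hX := sum_mul_eq_sub_of_bianchi hRa hRbianchi fun t p s q => ∑ j, ∑ l, T t j p l * T s j q l
  simp only [mul_sum, ← mul_assoc] at hX
  rw [hX, hα, hβ, sum_contraction_eq_four_mul_of_bianchi hRa hRb hTa hTbianchi]
  ring

theorem curvature_contraction_beta
    (n : ℕ) (R T : Fin n → Fin n → Fin n → Fin n → ℝ)
    (hRa : ∀ i j k l, R i j k l = - R j i k l)
    (hRb : ∀ i j k l, R i j k l = - R i j l k)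
    (hRc : ∀ i j k l, R i j k l = R k l i j)
    (hRbianchi : ∀ i j k l, R i j k l + R j k i l + R k i j l = 0)
    (hTa : ∀ i j k l, T i j k l = - T j i k l)
    (hTb : ∀ i j k l, T i j k l = - T i j l k)
    (hTc : ∀ i j k l, T i j k l = T k l i j)
    (hTbianchi : ∀ i j k l, T i j k l + T j k i l + T k i j l = 0)
    (α β : ℝ)
    (hα : α = ∑ t, ∑ p, ∑ s, ∑ q, ∑ k, ∑ l, R t p s q * T t p k l * T s q k l)
    (hβ : β = ∑ t, ∑ s, ∑ p, ∑ q, ∑ j, ∑ l, R t s p q * T t j p l * T s j q l) :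
    (∑ p, ∑ s, ∑ t, ∑ q, ∑ j, ∑ l, R p s t q * T t j p l * T s j q l) = - α / 4 + β :=
  curvature_contraction_beta_general n R T hRa hRb hRbianchi hTa hTbianchi α β hα hβ
end

section
/- Let W be an algebraic Weyl tensor (an algebraic curvature tensor with vanishing Ricci trace, ∑_i W_{ikil} = 0 for all k,l) on an n-dimensional Euclidean vector space, n ≥ 3. Let {S^α} be an orthonormal basis of the space of trace-free symmetric 2-tensors, and let S^α act on W by (S^α W)_{ijkl} = ∑_m (S^α_{im}W_{mjkl} + S^α_{jm}W_{imkl} + S^α_{km}W_{ijml} + S^α_{lm}W_{ijkm}). Then ∑_α |S^α W|² = 2(n² + n - 8)|W|²/n. -/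
open Finset

/-- The derivation action of a symmetric 2-tensor `S` on a 4-tensor `W`. -/
def tensorAct (n : ℕ) (S : Fin n → Fin n → ℝ)
    (W : Fin n → Fin n → Fin n → Fin n → ℝ) (i j k l : Fin n) : ℝ :=
  ∑ m, (S i m * W m j k l + S j m * W i m k l + S k m * W i j m l + S l m * W i j k m)

/-!
Write `(S W)_{ijkl} = ∑_{ab} G_{ab} S_{ab}` with `G = tensorActCoeff W i j k l`. Completeness of the
basis gives `∑_α ⟨G, S^α⟩² = ⟨π G, G⟩` for the orthogonal projection `π = symmTracelessPart` onto
trace-free symmetric matrices, that is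
`∑_α (S^α W)_{ijkl}² = |G|²/2 + ⟨G, Gᵀ⟩/2 - (tr G)²/n`.
Summed over `i j k l` these three terms become `4n|W|²` (the mixed terms cancel by the
antisymmetries and the Bianchi identity), `4|W|²` (the mixed terms are traces of `W`) and `16|W|²`
(since `tr G = 4 W_{ijkl}`).
-/

section SumLemmas

variable {α β R : Type*} [Fintype α] [Fintype β] [NonUnitalNonAssocSemiring R]

theorem sum_sum_mul_eq_zero_of_sum_eq_zero {g : α → β → R} (hg : ∀ b, ∑ a, g a b = 0)
    (f : β → R) : ∑ a, ∑ b, f b * g a b = 0 := by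
  rw [sum_comm]
  simp only [← mul_sum, hg, mul_zero, sum_const_zero]

theorem sum_sum_mul_eq_zero_of_sum_eq_zero' {g : α → β → R} (hg : ∀ b, ∑ a, g a b = 0)
    (f : β → R) : ∑ a, ∑ b, g a b * f b = 0 := by
  rw [sum_comm]
  simp only [← sum_mul, hg, zero_mul, sum_const_zero]

end SumLemmas

section SymmTraceless

variable {n : ℕ}

noncomputable def symmTracelessPart (G : Fin n → Fin n → ℝ) (i j : Fin n) : ℝ :=
  (G i j + G j i) / 2 - if i = j then (∑ k, G k k) / n else 0

theorem symmTracelessPart_comm (G : Fin n → Fin n → ℝ) (i j : Fin n) :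
    symmTracelessPart G i j = symmTracelessPart G j i := by
  simp only [symmTracelessPart, eq_comm (a := i), add_comm (G i j)]

theorem sum_symmTracelessPart_diag (hn : n ≠ 0) (G : Fin n → Fin n → ℝ) :
    ∑ i, symmTracelessPart G i i = 0 := by
  simp only [symmTracelessPart, if_true, ← two_mul, sum_sub_distrib, sum_const, card_univ,
    Fintype.card_fin, nsmul_eq_mul]
  field_simp
  ring

theorem sum_symmTracelessPart_mul {S : Fin n → Fin n → ℝ} (hS : ∀ i j, S i j = S j i)
    (hS₀ : ∑ i, S i i = 0) (G : Fin n → Fin n → ℝ) :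
    ∑ i, ∑ j, symmTracelessPart G i j * S i j = ∑ i, ∑ j, G i j * S i j := by
  have hGt : ∑ i, ∑ j, G j i * S i j = ∑ i, ∑ j, G i j * S i j := by
    rw [sum_comm]; simp only [hS]
  simp only [symmTracelessPart, sub_mul, ite_mul, zero_mul, add_mul, sum_sub_distrib,
    sum_add_distrib, sum_ite_eq, mem_univ, if_true, div_mul_eq_mul_div, ← sum_div, ← mul_sum, hS₀,
    hGt]
  ring

theorem sum_symmTracelessPart_mul_self (G : Fin n → Fin n → ℝ) :
    ∑ i, ∑ j, symmTracelessPart G i j * G i j =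
      (∑ i, ∑ j, G i j ^ 2) / 2 + (∑ i, ∑ j, G i j * G j i) / 2 - (∑ i, G i i) ^ 2 / n := by
  simp only [symmTracelessPart, sub_mul, ite_mul, zero_mul, add_mul, sum_sub_distrib,
    sum_add_distrib, sum_ite_eq, mem_univ, if_true, div_mul_eq_mul_div, ← sum_div, ← mul_sum, sq,
    mul_comm (G _ _) (G _ _)]
  ring

/-- Parseval's identity: expanding `symmTracelessPart G` in the complete family `S`, its
coefficients are the `⟨G, S α⟩`. -/
theorem sum_sq_sum_mul_eq_sum_symmTracelessPart_mul {ι : Type*} [Fintype ι] (hn : n ≠ 0)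
    (S : ι → Fin n → Fin n → ℝ) (hS : ∀ α i j, S α i j = S α j i)
    (hS₀ : ∀ α, ∑ i, S α i i = 0)
    (hScomplete : ∀ T : Fin n → Fin n → ℝ, (∀ i j, T i j = T j i) → (∑ i, T i i = 0) →
      ∀ i j, T i j = ∑ α, (∑ k, ∑ l, T k l * S α k l) * S α i j)
    (G : Fin n → Fin n → ℝ) :
    ∑ α, (∑ i, ∑ j, G i j * S α i j) ^ 2 = ∑ i, ∑ j, symmTracelessPart G i j * G i j := by
  have hexp := hScomplete (symmTracelessPart G) (symmTracelessPart_comm G)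
    (sum_symmTracelessPart_diag hn G)
  simp only [sum_symmTracelessPart_mul (hS _) (hS₀ _)] at hexp
  calc ∑ α, (∑ i, ∑ j, G i j * S α i j) ^ 2
      = ∑ α, ∑ i, ∑ j, (∑ k, ∑ l, G k l * S α k l) * S α i j * G i j := by
        simp only [sq, mul_sum]
        exact sum_congr rfl fun α _ => sum_congr rfl fun i _ => sum_congr rfl fun j _ => by ring
    _ = ∑ i, ∑ j, symmTracelessPart G i j * G i j := by
        simp only [← sum_comm_cycle, ← sum_mul, ← hexp]

end SymmTraceless

section WeylContractions

variable {n : ℕ}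

def tensorActCoeff (W : Fin n → Fin n → Fin n → Fin n → ℝ) (i j k l a b : Fin n) : ℝ :=
  (if a = i then W b j k l else 0) + (if a = j then W i b k l else 0) +
    (if a = k then W i j b l else 0) + (if a = l then W i j k b else 0)

theorem tensorAct_eq_sum_tensorActCoeff_mul (S : Fin n → Fin n → ℝ)
    (W : Fin n → Fin n → Fin n → Fin n → ℝ) (i j k l : Fin n) :
    tensorAct n S W i j k l = ∑ a, ∑ b, tensorActCoeff W i j k l a b * S a b := by
  simp only [tensorAct, tensorActCoeff, add_mul, ite_mul, zero_mul, sum_add_distrib,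
    sum_ite_irrel, sum_const_zero, sum_ite_eq', mem_univ, if_true, mul_comm (S _ _)]

theorem sum_tensorActCoeff_diag (W : Fin n → Fin n → Fin n → Fin n → ℝ) (i j k l : Fin n) :
    ∑ a, tensorActCoeff W i j k l a a = 4 * W i j k l := by
  simp only [tensorActCoeff, sum_add_distrib, sum_ite_eq', mem_univ, if_true]
  ring

variable {W : Fin n → Fin n → Fin n → Fin n → ℝ}

theorem sum_mul_swap_middle_eq_half_sum_sq (ha : ∀ i j k l, W i j k l = -W j i k l)
    (hbianchi : ∀ i j k l, W i j k l + W j k i l + W k i j l = 0) :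
    ∑ a, ∑ b, ∑ c, ∑ d, W a b c d * W a c b d = (∑ a, ∑ b, ∑ c, ∑ d, W a b c d ^ 2) / 2 := by
  have hcyc : ∀ a b c d, W a b c d * W a c b d = W a b c d ^ 2 - W a b c d * W c b a d :=
    fun a b c d => by linear_combination W a b c d * hbianchi a c b d - W a b c d * ha b a c d
  have hswap : ∀ a b c d, W b a c d * W c a b d = W a b c d * W a c b d :=
    fun a b c d => by rw [ha b a c d, ha c a b d]; ring
  have hrelabel : ∑ a, ∑ b, ∑ c, ∑ d, W a b c d * W c b a d =
      ∑ a, ∑ b, ∑ c, ∑ d, W a b c d * W a c b d := by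
    rw [sum_comm]; simp only [hswap]
  simp only [hcyc, sum_sub_distrib] at hrelabel ⊢
  linarith

theorem sum_sum_tensorActCoeff_sq (ha : ∀ i j k l, W i j k l = -W j i k l)
    (hb : ∀ i j k l, W i j k l = -W i j l k)
    (hbianchi : ∀ i j k l, W i j k l + W j k i l + W k i j l = 0) :
    ∑ i, ∑ j, ∑ k, ∑ l, ∑ a, ∑ b, tensorActCoeff W i j k l a b ^ 2 =
      4 * n * ∑ i, ∑ j, ∑ k, ∑ l, W i j k l ^ 2 := by
  have hrot : ∑ a, ∑ b, ∑ c, ∑ d, W d a b c ^ 2 = ∑ a, ∑ b, ∑ c, ∑ d, W a b c d ^ 2 :=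
    (sum_congr rfl fun _ _ => sum_comm_cycle).trans sum_comm
  have h₂ : ∑ a, ∑ b, ∑ c, ∑ d, W a d b c ^ 2 = ∑ a, ∑ b, ∑ c, ∑ d, W a b c d ^ 2 := by
    rw [← hrot]; congr! 4 with a - b - c - d; rw [ha]; ring
  have h₃ : ∑ a, ∑ b, ∑ c, ∑ d, W a b d c ^ 2 = ∑ a, ∑ b, ∑ c, ∑ d, W a b c d ^ 2 := by
    congr! 4 with a - b - c - d; rw [hb]; ring
  have h₂₃ : ∑ a, ∑ b, ∑ c, ∑ d, W a d b c * W a b d c =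
      (∑ a, ∑ b, ∑ c, ∑ d, W a b c d ^ 2) / 2 :=
    (sum_congr rfl fun _ _ => sum_comm_cycle).trans (sum_mul_swap_middle_eq_half_sum_sq ha hbianchi)
  have e₁₃ : ∀ a b c d, W d b a c * W a b d c = W b d a c * W b a d c :=
    fun a b c d => by rw [ha d b, ha a b]; ring
  have h₁₃ : ∑ a, ∑ b, ∑ c, ∑ d, W d b a c * W a b d c =
      (∑ a, ∑ b, ∑ c, ∑ d, W a b c d ^ 2) / 2 := by
    rw [sum_comm]; simp only [e₁₃]; exact h₂₃
  have e₁₂ : ∀ a b c d, 2 * W d a b c * W a d b c = -2 * W d a b c ^ 2 :=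
    fun a b c d => by rw [ha a d]; ring
  have e₃₄ : ∀ a b c d, 2 * W a b d c * W a b c d = -2 * W a b c d ^ 2 :=
    fun a b c d => by rw [hb a b d]; ring
  have e₁₄ : ∀ a b c d, 2 * W d b c a * W a b c d = 2 * (W d b a c * W a b d c) :=
    fun a b c d => by rw [hb d b c, hb a b c]; ring
  have e₂₄ : ∀ a b c d, 2 * W a d c b * W a b c d = 2 * (W a d b c * W a b d c) :=
    fun a b c d => by rw [hb a d c, hb a b c]; ring
  -- The expansion has four squared terms, each `n|W|²` after relabelling (`hrot`, `h₂`, `h₃`), and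
  -- six mixed terms, which `e₁₂`, `e₃₄`, `e₁₄`, `e₂₄` reduce to `-2|W|²` or to `h₁₃`, `h₂₃`.
  simp only [tensorActCoeff, add_sq, add_mul, mul_add, ite_pow, ite_mul, mul_ite, zero_mul,
    mul_zero, ne_eq, OfNat.ofNat_ne_zero, not_false_eq_true, zero_pow, sum_add_distrib,
    sum_ite_eq', mem_univ, if_true, sum_ite_irrel, sum_const_zero]
  simp only [sum_const, card_univ, Fintype.card_fin, nsmul_eq_mul, ← mul_sum, e₁₂, e₃₄, e₁₄, e₂₄,
    mul_assoc]
  rw [hrot, h₂, h₃, h₁₃, h₂₃]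
  ring

theorem sum_sum_tensorActCoeff_mul_transpose (ha : ∀ i j k l, W i j k l = -W j i k l)
    (hb : ∀ i j k l, W i j k l = -W i j l k) (htrace : ∀ k l, ∑ i, W i k i l = 0) :
    ∑ i, ∑ j, ∑ k, ∑ l, ∑ a, ∑ b, tensorActCoeff W i j k l a b * tensorActCoeff W i j k l b a =
      4 * ∑ i, ∑ j, ∑ k, ∑ l, W i j k l ^ 2 := by
  have hdiag₁₂ : ∀ i k l, W i i k l = 0 := fun i k l => by linarith [ha i i k l]
  have hdiag₃₄ : ∀ i j k, W i j k k = 0 := fun i j k => by linarith [hb i j k k]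
  have htrace₁₄ : ∀ j k, ∑ i, W i j k i = 0 := fun j k => by
    simp only [hb _ j k, sum_neg_distrib, htrace, neg_zero]
  have htrace₂₃ : ∀ i l, ∑ j, W i j j l = 0 := fun i l => by
    simp only [ha i, sum_neg_distrib, htrace, neg_zero]
  have htrace₂₄ : ∀ i k, ∑ j, W i j k j = 0 := fun i k => by
    simp only [ha i, hb _ i k, neg_neg, htrace]
  simp only [tensorActCoeff, add_mul, mul_add, ite_mul, mul_ite, zero_mul, mul_zero,
    sum_add_distrib, sum_ite_eq', mem_univ, if_true]
  simp only [hdiag₁₂, hdiag₃₄, zero_mul, mul_zero, sum_const_zero, ← mul_sum, ← sum_mul, htrace₁₄,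
    htrace₂₄, sum_sum_mul_eq_zero_of_sum_eq_zero (htrace _),
    sum_sum_mul_eq_zero_of_sum_eq_zero' (htrace _),
    sum_sum_mul_eq_zero_of_sum_eq_zero (htrace₂₃ _),
    sum_sum_mul_eq_zero_of_sum_eq_zero' (htrace₂₃ _), add_zero, zero_add]
  simp only [← sq]
  ring

end WeylContractions

theorem sum_basis_act_weyl_sq_general
    (n N : ℕ) (hn : 3 ≤ n)
    (W : Fin n → Fin n → Fin n → Fin n → ℝ)
    (hWa : ∀ i j k l, W i j k l = - W j i k l)
    (hWb : ∀ i j k l, W i j k l = - W i j l k)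
    (hWbianchi : ∀ i j k l, W i j k l + W j k i l + W k i j l = 0)
    (hWtrace : ∀ k l, ∑ i, W i k i l = 0)
    (S : Fin N → Fin n → Fin n → ℝ)
    (hSsymm : ∀ α i j, S α i j = S α j i)
    (hStrace : ∀ α, ∑ i, S α i i = 0)
    (hScomplete : ∀ T : Fin n → Fin n → ℝ, (∀ i j, T i j = T j i) → (∑ i, T i i = 0) →
      ∀ i j, T i j = ∑ α, (∑ k, ∑ l, T k l * S α k l) * S α i j) :
    (∑ α, ∑ i, ∑ j, ∑ k, ∑ l, (tensorAct n (S α) W i j k l) ^ 2) =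
      2 * ((n : ℝ) ^ 2 + n - 8) * (∑ i, ∑ j, ∑ k, ∑ l, (W i j k l) ^ 2) / n := by
  have hn₀ : n ≠ 0 := by omega
  have hpoint : ∀ i j k l, ∑ α, tensorAct n (S α) W i j k l ^ 2 =
      (∑ a, ∑ b, tensorActCoeff W i j k l a b ^ 2) / 2 +
        (∑ a, ∑ b, tensorActCoeff W i j k l a b * tensorActCoeff W i j k l b a) / 2 -
        (∑ a, tensorActCoeff W i j k l a a) ^ 2 / n := fun i j k l => by
    simp only [tensorAct_eq_sum_tensorActCoeff_mul,
      sum_sq_sum_mul_eq_sum_symmTracelessPart_mul hn₀ S hSsymm hStrace hScomplete,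
      sum_symmTracelessPart_mul_self]
  calc (∑ α, ∑ i, ∑ j, ∑ k, ∑ l, (tensorAct n (S α) W i j k l) ^ 2)
      = ∑ i, ∑ j, ∑ k, ∑ l, ∑ α, tensorAct n (S α) W i j k l ^ 2 := by
        simp only [sum_comm (γ := Fin N)]
    _ = 4 * n * (∑ i, ∑ j, ∑ k, ∑ l, W i j k l ^ 2) / 2 +
          4 * (∑ i, ∑ j, ∑ k, ∑ l, W i j k l ^ 2) / 2 -
          4 ^ 2 * (∑ i, ∑ j, ∑ k, ∑ l, W i j k l ^ 2) / n := by
        simp only [hpoint, sum_add_distrib, sum_sub_distrib, ← sum_div, sum_tensorActCoeff_diag,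
          mul_pow, ← mul_sum, sum_sum_tensorActCoeff_sq hWa hWb hWbianchi,
          sum_sum_tensorActCoeff_mul_transpose hWa hWb hWtrace]
    _ = 2 * ((n : ℝ) ^ 2 + n - 8) * (∑ i, ∑ j, ∑ k, ∑ l, (W i j k l) ^ 2) / n := by
        field_simp
        ring

theorem sum_basis_act_weyl_sq
    (n N : ℕ) (hn : 3 ≤ n) (hN : 2 * N = (n - 1) * (n + 2))
    (W : Fin n → Fin n → Fin n → Fin n → ℝ)
    (hWa : ∀ i j k l, W i j k l = - W j i k l)
    (hWb : ∀ i j k l, W i j k l = - W i j l k)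
    (hWc : ∀ i j k l, W i j k l = W k l i j)
    (hWbianchi : ∀ i j k l, W i j k l + W j k i l + W k i j l = 0)
    (hWtrace : ∀ k l, ∑ i, W i k i l = 0)
    (S : Fin N → Fin n → Fin n → ℝ)
    (hSsymm : ∀ α i j, S α i j = S α j i)
    (hStrace : ∀ α, ∑ i, S α i i = 0)
    (hSortho : ∀ α β, (∑ i, ∑ j, S α i j * S β i j) = if α = β then 1 else 0)
    (hScomplete : ∀ T : Fin n → Fin n → ℝ, (∀ i j, T i j = T j i) → (∑ i, T i i = 0) →
      ∀ i j, T i j = ∑ α, (∑ k, ∑ l, T k l * S α k l) * S α i j) :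
    (∑ α, ∑ i, ∑ j, ∑ k, ∑ l, (tensorAct n (S α) W i j k l) ^ 2) =
      2 * ((n : ℝ) ^ 2 + n - 8) * (∑ i, ∑ j, ∑ k, ∑ l, (W i j k l) ^ 2) / n :=
  sum_basis_act_weyl_sq_general n N hn W hWa hWb hWbianchi hWtrace S hSsymm hStrace hScomplete
end

section
/- Let W be an algebraic Weyl tensor on an n-dimensional Euclidean vector space with n ≥ 4. For any trace-free symmetric 2-tensor S with |S| = 1, one has |SW|² ≤ 8(n-2)|W|²/n, where (SW)_{ijkl} = ∑_m (S_{im}W_{mjkl} + S_{jm}W_{imkl} + S_{km}W_{ijml} + S_{lm}W_{ijkm}). -/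
/-!
Diagonalize `S = U diag(λ) Uᵀ` with `U` orthogonal; then `∑ λ = 0` and `∑ λ² = 1`. Read as a matrix
on pairs of indices, a 4-tensor `M` is sent by the action of `S` to `A M + M A`, where
`A = S ⊗ 1 + 1 ⊗ S` is the Kronecker sum, and conjugation by the orthogonal matrix `U ⊗ U` makes
`A` diagonal with entries `λ_p + λ_q`. So in the eigenbasis
`(SW)_{pqrs} = (λ_p + λ_q + λ_r + λ_s) W_{pqrs}`, both norms are unchanged, and `W_{pqrs}` still
vanishes when `p = q` or `r = s`. For `p ≠ q` and `r ≠ s`, let `w_m` count the occurrences of `m`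
among `p, q, r, s`; then `λ_p + λ_q + λ_r + λ_s = ∑ (w_m - 4/n) λ_m`, and Cauchy–Schwarz bounds its
square by `∑ (w_m - 4/n)² = ∑ w_m² - 16/n ≤ 8 - 16/n`.
-/

open Finset

open Matrix
open scoped Kronecker

theorem Finset.sum_sum_eq_zero_of_antisymm {ι : Type*} [Fintype ι] {f : ι → ι → ℝ}
    (hf : ∀ a b, f b a = -f a b) : ∑ a, ∑ b, f a b = 0 := by
  have h : ∑ a, ∑ b, f a b = -∑ a, ∑ b, f a b :=
    calc ∑ a, ∑ b, f a b = ∑ a, ∑ b, f b a := sum_comm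
      _ = -∑ a, ∑ b, f a b := by
        simp only [← sum_neg_distrib]
        exact sum_congr rfl fun a _ => sum_congr rfl fun b _ => hf a b
  linarith

theorem sq_add_add_add_le_of_sum_eq_zero {ι : Type*} [Fintype ι] [DecidableEq ι] {d : ι → ℝ}
    (h0 : ∑ i, d i = 0) (h1 : ∑ i, d i ^ 2 = 1) {p q r s : ι} (hpq : p ≠ q) (hrs : r ≠ s) :
    (d p + d q + (d r + d s)) ^ 2 ≤ 8 * (Fintype.card ι - 2) / Fintype.card ι := by
  set N : ℝ := (Fintype.card ι : ℝ)
  have hN : 0 < N := by simpa [N] using Fintype.card_pos_iff.mpr ⟨p⟩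
  set w : ι → ℝ := Pi.single p 1 + Pi.single q 1 + (Pi.single r 1 + Pi.single s 1)
  have hw_sum : ∑ m, w m = 4 := by
    norm_num [w, sum_add_distrib]
  have hw_sq : ∑ m, w m ^ 2 ≤ 8 := by
    have hle : ∀ m, w m ^ 2 ≤ 2 * w m := fun m => by
      simp only [w, Pi.add_apply, Pi.single_apply]
      split_ifs <;> subst_vars <;> simp_all <;> norm_num
    calc ∑ m, w m ^ 2 ≤ ∑ m, 2 * w m := sum_le_sum fun m _ => hle m
      _ = 8 := by rw [← mul_sum, hw_sum]; norm_num
  have hwd : ∑ m, (w m - 4 / N) * d m = d p + d q + (d r + d s) := by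
    simp [sub_mul, sum_sub_distrib, ← mul_sum, h0, w, add_mul, sum_add_distrib, Pi.single_apply]
  have hw_var : ∑ m, (w m - 4 / N) ^ 2 = ∑ m, w m ^ 2 - 16 / N := by
    simp only [sub_sq, sum_add_distrib, sum_sub_distrib, ← sum_mul, ← mul_sum, sum_const,
      card_univ, nsmul_eq_mul, hw_sum]
    field_simp
    ring
  calc (d p + d q + (d r + d s)) ^ 2 = (∑ m, (w m - 4 / N) * d m) ^ 2 := by rw [hwd]
    _ ≤ (∑ m, (w m - 4 / N) ^ 2) * ∑ m, d m ^ 2 := sum_mul_sq_le_sq_mul_sq _ _ _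
    _ ≤ 8 - 16 / N := by rw [h1, mul_one, hw_var]; linarith
    _ = 8 * (N - 2) / N := by field_simp; ring

namespace Matrix

section Orthogonal

variable {ι : Type*} [Fintype ι]

theorem sum_sq_apply_eq_trace_mul_transpose {κ : Type*} [Fintype κ] (M : Matrix ι κ ℝ) :
    ∑ i, ∑ j, M i j ^ 2 = trace (M * Mᵀ) := by
  simp [trace, mul_apply, sq]

variable [DecidableEq ι]

theorem sum_sq_transpose_mul_mul_apply {U : Matrix ι ι ℝ} (hU : Uᵀ * U = 1) (M : Matrix ι ι ℝ) :
    ∑ i, ∑ j, (Uᵀ * M * U) i j ^ 2 = ∑ i, ∑ j, M i j ^ 2 := by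
  have hU' : U * Uᵀ = 1 := mul_eq_one_comm.mp hU
  simp only [sum_sq_apply_eq_trace_mul_transpose, transpose_mul, transpose_transpose]
  calc trace (Uᵀ * M * U * (Uᵀ * (Mᵀ * U))) = trace (Uᵀ * (M * Mᵀ * U)) := by
        simp only [Matrix.mul_assoc, ← Matrix.mul_assoc U, hU', Matrix.one_mul]
    _ = trace (M * Mᵀ) := by rw [trace_mul_comm, Matrix.mul_assoc, hU', Matrix.mul_one]

theorem IsSymm.exists_transpose_mul_mul_eq_diagonal {S : Matrix ι ι ℝ} (hS : S.IsSymm) :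
    ∃ (U : Matrix ι ι ℝ) (d : ι → ℝ), Uᵀ * U = 1 ∧ Uᵀ * S * U = diagonal d := by
  have hH : S.IsHermitian := by
    rw [IsHermitian, conjTranspose_eq_transpose_of_trivial]; exact hS
  exact ⟨hH.eigenvectorUnitary, _, mem_unitaryGroup_iff'.mp hH.eigenvectorUnitary.2,
    hH.conjStarAlgAut_star_eigenvectorUnitary⟩

theorem sum_eq_trace_of_transpose_mul_mul_eq_diagonal {U S : Matrix ι ι ℝ} {d : ι → ℝ}
    (hU : Uᵀ * U = 1) (hSU : Uᵀ * S * U = diagonal d) : ∑ i, d i = trace S := by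
  rw [← trace_diagonal, ← hSU, trace_mul_cycle, mul_eq_one_comm.mp hU, Matrix.one_mul]

theorem sum_sq_eq_of_transpose_mul_mul_eq_diagonal {U S : Matrix ι ι ℝ} {d : ι → ℝ}
    (hU : Uᵀ * U = 1) (hSU : Uᵀ * S * U = diagonal d) :
    ∑ i, d i ^ 2 = ∑ i, ∑ j, S i j ^ 2 := by
  rw [← sum_sq_transpose_mul_mul_apply hU, hSU]
  simp [diagonal_apply, ite_pow]

end Orthogonal

section Kronecker

variable {ι κ R : Type*} [Fintype ι] [DecidableEq ι] [Fintype κ] [DecidableEq κ] [CommRing R]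

def kroneckerSum (A : Matrix ι ι R) (B : Matrix κ κ R) : Matrix (ι × κ) (ι × κ) R :=
  A ⊗ₖ 1 + 1 ⊗ₖ B

theorem kronecker_transpose_mul_self {U : Matrix ι ι R} {V : Matrix κ κ R} (hU : Uᵀ * U = 1)
    (hV : Vᵀ * V = 1) : (U ⊗ₖ V)ᵀ * (U ⊗ₖ V) = 1 := by
  rw [← kroneckerMap_transpose, ← mul_kronecker_mul, hU, hV, one_kronecker_one]

theorem kronecker_transpose_mul_kroneckerSum_mul {U A : Matrix ι ι R} {V B : Matrix κ κ R}
    {a : ι → R} {b : κ → R} (hU : Uᵀ * U = 1) (hV : Vᵀ * V = 1)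
    (hA : Uᵀ * A * U = diagonal a) (hB : Vᵀ * B * V = diagonal b) :
    (U ⊗ₖ V)ᵀ * kroneckerSum A B * (U ⊗ₖ V) = diagonal fun I => a I.1 + b I.2 := by
  simp only [kroneckerSum, ← kroneckerMap_transpose, Matrix.mul_add, Matrix.add_mul,
    ← mul_kronecker_mul, Matrix.mul_one, hU, hV, hA, hB]
  rw [← diagonal_one, ← diagonal_one, diagonal_kronecker_diagonal, diagonal_kronecker_diagonal,
    diagonal_add]
  simp

end Kronecker

variable {ι : Type*} [Fintype ι]

theorem transpose_mul_mul_add_mul_mul [DecidableEq ι] {R : Type*} [CommRing R] {V : Matrix ι ι R}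
    (hV : V * Vᵀ = 1) (A M : Matrix ι ι R) :
    Vᵀ * (A * M + M * A) * V = Vᵀ * A * V * (Vᵀ * M * V) + Vᵀ * M * V * (Vᵀ * A * V) := by
  have hV' : ∀ X : Matrix ι ι R, V * (Vᵀ * X) = X := fun X => by
    rw [← Matrix.mul_assoc, hV, Matrix.one_mul]
  simp only [Matrix.mul_add, Matrix.add_mul, Matrix.mul_assoc, hV']

theorem kronecker_transpose_mul_mul_apply_self_left_eq_zero (U : Matrix ι ι ℝ)
    {M : Matrix (ι × ι) (ι × ι) ℝ} (hM : ∀ a b J, M (b, a) J = -M (a, b) J) (p : ι)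
    (J : ι × ι) : ((U ⊗ₖ U)ᵀ * M * (U ⊗ₖ U)) (p, p) J = 0 := by
  have h : ∀ L, ((U ⊗ₖ U)ᵀ * M) (p, p) L = 0 := fun L => by
    simp only [mul_apply, Fintype.sum_prod_type]
    exact sum_sum_eq_zero_of_antisymm fun a b => by
      simp only [transpose_apply, kroneckerMap_apply, hM a b L]; ring
  simp [mul_apply (M := (U ⊗ₖ U)ᵀ * M), h]

theorem kronecker_transpose_mul_mul_apply_self_right_eq_zero (U : Matrix ι ι ℝ)
    {M : Matrix (ι × ι) (ι × ι) ℝ} (hM : ∀ I a b, M I (b, a) = -M I (a, b)) (I : ι × ι)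
    (r : ι) : ((U ⊗ₖ U)ᵀ * M * (U ⊗ₖ U)) I (r, r) = 0 := by
  have h : (U ⊗ₖ U)ᵀ * Mᵀ * (U ⊗ₖ U) = ((U ⊗ₖ U)ᵀ * M * (U ⊗ₖ U))ᵀ := by
    simp only [transpose_mul, transpose_transpose, Matrix.mul_assoc]
  calc ((U ⊗ₖ U)ᵀ * M * (U ⊗ₖ U)) I (r, r) = ((U ⊗ₖ U)ᵀ * M * (U ⊗ₖ U))ᵀ (r, r) I := rfl
    _ = 0 := by
      rw [← h]
      exact kronecker_transpose_mul_mul_apply_self_left_eq_zero U (fun a b J => hM J a b) r I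

end Matrix

def pairMatrix {ι : Type*} (X : ι → ι → ι → ι → ℝ) : Matrix (ι × ι) (ι × ι) ℝ :=
  of fun I J => X I.1 I.2 J.1 J.2

theorem sum_sq_pairMatrix {ι : Type*} [Fintype ι] (X : ι → ι → ι → ι → ℝ) :
    ∑ I, ∑ J, pairMatrix X I J ^ 2 = ∑ i, ∑ j, ∑ k, ∑ l, X i j k l ^ 2 := by
  simp [pairMatrix, Fintype.sum_prod_type]

theorem pairMatrix_tensorAct {n : ℕ} {S : Matrix (Fin n) (Fin n) ℝ} (hS : S.IsSymm)
    (W : Fin n → Fin n → Fin n → Fin n → ℝ) :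
    pairMatrix (tensorAct n S W) =
      kroneckerSum S S * pairMatrix W + pairMatrix W * kroneckerSum S S := by
  ext ⟨i, j⟩ ⟨k, l⟩
  simp [pairMatrix, tensorAct, kroneckerSum, mul_apply, Fintype.sum_prod_type, one_apply,
    add_mul, mul_add, sum_add_distrib, ite_mul, mul_ite, hS.apply k, hS.apply l,
    mul_comm (W _ _ _ _), add_assoc]

theorem kronecker_transpose_mul_pairMatrix_tensorAct_mul_apply {n : ℕ}
    {S U : Matrix (Fin n) (Fin n) ℝ} {d : Fin n → ℝ} (hS : S.IsSymm) (hU : Uᵀ * U = 1)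
    (hSU : Uᵀ * S * U = diagonal d) (W : Fin n → Fin n → Fin n → Fin n → ℝ)
    (I J : Fin n × Fin n) :
    ((U ⊗ₖ U)ᵀ * pairMatrix (tensorAct n S W) * (U ⊗ₖ U)) I J =
      (d I.1 + d I.2 + (d J.1 + d J.2)) * ((U ⊗ₖ U)ᵀ * pairMatrix W * (U ⊗ₖ U)) I J := by
  rw [pairMatrix_tensorAct hS,
    transpose_mul_mul_add_mul_mul (mul_eq_one_comm.mp (kronecker_transpose_mul_self hU hU)),
    kronecker_transpose_mul_kroneckerSum_mul hU hU hSU hSU]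
  simp [diagonal_mul, mul_diagonal]
  ring

theorem act_weyl_sq_le_general
    (n : ℕ)
    (W : Fin n → Fin n → Fin n → Fin n → ℝ)
    (hWa : ∀ i j k l, W i j k l = - W j i k l)
    (hWb : ∀ i j k l, W i j k l = - W i j l k)
    (S : Fin n → Fin n → ℝ)
    (hSsymm : ∀ i j, S i j = S j i)
    (hStrace : ∑ i, S i i = 0)
    (hSnorm : (∑ i, ∑ j, (S i j) ^ 2) = 1) :
    (∑ i, ∑ j, ∑ k, ∑ l, (tensorAct n S W i j k l) ^ 2) ≤
      8 * ((n : ℝ) - 2) * (∑ i, ∑ j, ∑ k, ∑ l, (W i j k l) ^ 2) / n := by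
  change Matrix (Fin n) (Fin n) ℝ at S
  have hS : S.IsSymm := IsSymm.ext fun i j => hSsymm j i
  obtain ⟨U, d, hU, hSU⟩ := hS.exists_transpose_mul_mul_eq_diagonal
  have hd0 : ∑ p, d p = 0 := (sum_eq_trace_of_transpose_mul_mul_eq_diagonal hU hSU).trans hStrace
  have hd1 : ∑ p, d p ^ 2 = 1 := (sum_sq_eq_of_transpose_mul_mul_eq_diagonal hU hSU).trans hSnorm
  have hV := kronecker_transpose_mul_self hU hU
  set M := (U ⊗ₖ U)ᵀ * pairMatrix W * (U ⊗ₖ U)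
  have hbound : ∀ I J, ((d I.1 + d I.2 + (d J.1 + d J.2)) * M I J) ^ 2 ≤
      8 * ((n : ℝ) - 2) / n * M I J ^ 2 := by
    rintro ⟨p, q⟩ ⟨r, s⟩
    rcases eq_or_ne p q with rfl | hpq
    · simp [M, kronecker_transpose_mul_mul_apply_self_left_eq_zero U (M := pairMatrix W)
        (fun a b J => hWa b a J.1 J.2)]
    rcases eq_or_ne r s with rfl | hrs
    · simp [M, kronecker_transpose_mul_mul_apply_self_right_eq_zero U (M := pairMatrix W)
        (fun I a b => hWb I.1 I.2 b a)]
    rw [mul_pow]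
    gcongr
    simpa using sq_add_add_add_le_of_sum_eq_zero hd0 hd1 hpq hrs
  calc ∑ i, ∑ j, ∑ k, ∑ l, tensorAct n S W i j k l ^ 2
      = ∑ I, ∑ J, ((d I.1 + d I.2 + (d J.1 + d J.2)) * M I J) ^ 2 := by
        simp only [M, ← sum_sq_pairMatrix, ← sum_sq_transpose_mul_mul_apply hV,
          kronecker_transpose_mul_pairMatrix_tensorAct_mul_apply hS hU hSU]
    _ ≤ ∑ I, ∑ J, 8 * ((n : ℝ) - 2) / n * M I J ^ 2 :=
        sum_le_sum fun I _ => sum_le_sum fun J _ => hbound I J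
    _ = 8 * ((n : ℝ) - 2) * (∑ i, ∑ j, ∑ k, ∑ l, W i j k l ^ 2) / n := by
        simp only [← mul_sum, M, sum_sq_transpose_mul_mul_apply hV, sum_sq_pairMatrix]
        ring

theorem act_weyl_sq_le
    (n : ℕ) (hn : 4 ≤ n)
    (W : Fin n → Fin n → Fin n → Fin n → ℝ)
    (hWa : ∀ i j k l, W i j k l = - W j i k l)
    (hWb : ∀ i j k l, W i j k l = - W i j l k)
    (hWc : ∀ i j k l, W i j k l = W k l i j)
    (hWbianchi : ∀ i j k l, W i j k l + W j k i l + W k i j l = 0)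
    (hWtrace : ∀ k l, ∑ i, W i k i l = 0)
    (S : Fin n → Fin n → ℝ)
    (hSsymm : ∀ i j, S i j = S j i)
    (hStrace : ∑ i, S i i = 0)
    (hSnorm : (∑ i, ∑ j, (S i j) ^ 2) = 1) :
    (∑ i, ∑ j, ∑ k, ∑ l, (tensorAct n S W i j k l) ^ 2) ≤
      8 * ((n : ℝ) - 2) * (∑ i, ∑ j, ∑ k, ∑ l, (W i j k l) ^ 2) / n :=
  act_weyl_sq_le_general n W hWa hWb S hSsymm hStrace hSnorm
end

section
/- Fix integers N ≥ 2, 1 ≤ k₂ < N, reals B > 0 and C ≥ 0. Consider nondecreasing sequences λ_1 ≤ ... ≤ λ_N of reals with ∑_{i=1}^{k₂} λ_i = a and ∑_{i=1}^N λ_i = C, where 0 ≤ a ≤ k₂C/N. Then the infimum over all such sequences of f = BC∑_i λ_i² + ∑_i λ_i³ is attained at a = 0 or at a = k₂C/N. -/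
/-!
Write `λ = c + w` with `c = C / N` the mean, so that `∑ w = 0`, and move along the ray
`μ_t = c + t w`. It keeps the sequence nondecreasing (for `t ≥ 0`) with total sum `C`, the
first-block sum is affine in `t`, equal to `k₂C/N` at `t = 0` and to `0` at some `t₀ ≥ 1`, and
the energy is `f(μ_t) = f(c) + A t² + S t³` with `A ≥ 0`. Such a cubic can never be smaller at
`t = 1` than at both `t = 0` and `t = t₀`.
-/

open Finset

section CubicEnergy

variable {ι : Type*} (s : Finset ι) (K : ℝ)

def cubicEnergy (μ : ι → ℝ) : ℝ :=
  K * ∑ i ∈ s, μ i ^ 2 + ∑ i ∈ s, μ i ^ 3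

theorem cubicEnergy_const_add_mul {w : ι → ℝ} (hw : ∑ i ∈ s, w i = 0) (c t : ℝ) :
    cubicEnergy s K (fun i => c + t * w i) =
      cubicEnergy s K (fun _ => c) + (K + 3 * c) * (∑ i ∈ s, w i ^ 2) * t ^ 2 +
        (∑ i ∈ s, w i ^ 3) * t ^ 3 := by
  have expand2 : ∀ i, (c + t * w i) ^ 2 = c ^ 2 + 2 * c * t * w i + t ^ 2 * w i ^ 2 :=
    fun i => by ring
  have expand3 : ∀ i, (c + t * w i) ^ 3 =
      c ^ 3 + 3 * c ^ 2 * t * w i + 3 * c * t ^ 2 * w i ^ 2 + t ^ 3 * w i ^ 3 :=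
    fun i => by ring
  simp only [cubicEnergy, expand2, expand3, sum_add_distrib, ← mul_sum, hw]
  ring

theorem nonneg_or_cubic_le_of_one_le {A S t : ℝ} (hA : 0 ≤ A) (ht : 1 ≤ t) :
    0 ≤ A + S ∨ A * t ^ 2 + S * t ^ 3 ≤ A + S := by
  refine or_iff_not_imp_left.2 fun hneg => ?_
  have ht2 : t ^ 2 ≤ t ^ 3 := pow_le_pow_right₀ ht (by norm_num)
  have ht3 : 1 ≤ t ^ 3 := one_le_pow₀ ht
  nlinarith [mul_le_mul_of_nonneg_left ht2 hA]

theorem exists_cubicEnergy_le_on_ray {c : ℝ} (hc : 0 ≤ K + 3 * c) {w : ι → ℝ}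
    (hw : ∑ i ∈ s, w i = 0) {t₀ : ℝ} (ht₀ : 1 ≤ t₀) :
    ∃ t, (t = 0 ∨ t = t₀) ∧
      cubicEnergy s K (fun i => c + t * w i) ≤ cubicEnergy s K (fun i => c + w i) := by
  have hA : 0 ≤ (K + 3 * c) * ∑ i ∈ s, w i ^ 2 :=
    mul_nonneg hc (sum_nonneg fun i _ => sq_nonneg _)
  have h1 := cubicEnergy_const_add_mul s K hw c 1
  simp only [one_mul, one_pow, mul_one] at h1
  rcases nonneg_or_cubic_le_of_one_le (S := ∑ i ∈ s, w i ^ 3) hA ht₀ with h | h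
  · refine ⟨0, Or.inl rfl, ?_⟩
    rw [cubicEnergy_const_add_mul s K hw, h1]
    linarith
  · refine ⟨t₀, Or.inr rfl, ?_⟩
    rw [cubicEnergy_const_add_mul s K hw, h1]
    linarith

end CubicEnergy

theorem sum_const_add_mul {ι : Type*} (s : Finset ι) (c t : ℝ) (w : ι → ℝ) :
    ∑ i ∈ s, (c + t * w i) = #s * c + t * ∑ i ∈ s, w i := by
  simp only [sum_add_distrib, ← mul_sum, sum_const, nsmul_eq_mul]

theorem inf_attained_at_endpoint_general
    (N k₂ : ℕ) (hkN : k₂ < N)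
    (B C : ℝ) (hB : 0 < B) (hC : 0 ≤ C)
    (lam : ℕ → ℝ)
    (hmono : ∀ i j, i < N → j < N → i ≤ j → lam i ≤ lam j)
    (a : ℝ) (ha : ∑ i ∈ range k₂, lam i = a)
    (hsum : ∑ i ∈ range N, lam i = C)
    (ha0 : 0 ≤ a) (ha1 : a ≤ k₂ * C / N) :
    ∃ μ : ℕ → ℝ,
      (∀ i j, i < N → j < N → i ≤ j → μ i ≤ μ j) ∧
      (∑ i ∈ range N, μ i = C) ∧
      ((∑ i ∈ range k₂, μ i = 0) ∨ (∑ i ∈ range k₂, μ i = k₂ * C / N)) ∧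
      B * C * (∑ i ∈ range N, (μ i) ^ 2) + (∑ i ∈ range N, (μ i) ^ 3) ≤
        B * C * (∑ i ∈ range N, (lam i) ^ 2) + (∑ i ∈ range N, (lam i) ^ 3) := by
  rcases ha1.eq_or_lt with hend | hlt
  · exact ⟨lam, hmono, hsum, Or.inr (ha.trans hend), le_rfl⟩
  have hN : (N : ℝ) ≠ 0 := Nat.cast_ne_zero.2 (by omega)
  set M : ℝ := k₂ * C / N
  set c := C / N
  have hkc : (k₂ : ℝ) * c = M := mul_div_assoc _ _ _ |>.symm
  have hNc : (N : ℝ) * c = C := mul_div_cancel₀ C hN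
  have hw : ∑ i ∈ range N, (lam i - c) = 0 := by
    rw [sum_sub_distrib, hsum, sum_const, card_range, nsmul_eq_mul, hNc, sub_self]
  have hblock : ∑ i ∈ range k₂, (lam i - c) = a - M := by
    rw [sum_sub_distrib, ha, sum_const, card_range, nsmul_eq_mul, hkc]
  have ht₀ : 1 ≤ M / (M - a) := by
    rw [le_div_iff₀ (by linarith)]
    linarith
  obtain ⟨t, ht, hle⟩ := exists_cubicEnergy_le_on_ray (range N) (B * C)
    (c := c) (by positivity) hw ht₀
  have hlam : (fun i => c + (lam i - c)) = lam := funext fun i => add_sub_cancel c (lam i)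
  have ht0 : 0 ≤ t := by rcases ht with rfl | rfl <;> linarith
  refine ⟨fun i => c + t * (lam i - c), fun i j hi hj hij => ?_, ?_, ?_, ?_⟩
  · dsimp only
    gcongr
    exact hmono i j hi hj hij
  · rw [sum_const_add_mul, hw, card_range, mul_zero, add_zero, hNc]
  · rw [sum_const_add_mul, hblock, card_range, hkc]
    rcases ht with rfl | rfl
    · exact Or.inr (by ring)
    · exact Or.inl (by field_simp [(sub_pos.2 hlt).ne']; ring)
  · rw [hlam] at hle
    exact hle

theorem inf_attained_at_endpoint
    (N k₂ : ℕ) (hN : 2 ≤ N) (hk : 1 ≤ k₂) (hkN : k₂ < N)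
    (B C : ℝ) (hB : 0 < B) (hC : 0 ≤ C)
    (lam : ℕ → ℝ)
    (hmono : ∀ i j, i < N → j < N → i ≤ j → lam i ≤ lam j)
    (a : ℝ) (ha : ∑ i ∈ range k₂, lam i = a)
    (hsum : ∑ i ∈ range N, lam i = C)
    (ha0 : 0 ≤ a) (ha1 : a ≤ k₂ * C / N) :
    ∃ μ : ℕ → ℝ,
      (∀ i j, i < N → j < N → i ≤ j → μ i ≤ μ j) ∧
      (∑ i ∈ range N, μ i = C) ∧
      ((∑ i ∈ range k₂, μ i = 0) ∨ (∑ i ∈ range k₂, μ i = k₂ * C / N)) ∧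
      B * C * (∑ i ∈ range N, (μ i) ^ 2) + (∑ i ∈ range N, (μ i) ^ 3) ≤
        B * C * (∑ i ∈ range N, (lam i) ^ 2) + (∑ i ∈ range N, (lam i) ^ 3) :=
  inf_attained_at_endpoint_general N k₂ hkN B C hB hC lam hmono a ha hsum ha0 ha1
end

section
/- Let n ≥ 11 be an integer, N = (n-1)(n+2)/2, k₂ = ⌊(n+2)/4⌋, B = 2(n²-11n+4)/(3n(n-1)(n+2)), and C > 0. Then for the configuration λ_1 = ... = λ_{k₂} = 0, λ_{k₂+1} = ... = λ_N = C/(N-k₂), the quantity F = B·C·(∑λ_i² − C²/N) + (∑λ_i³ − C³/N²) is strictly positive. -/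
open Finset

theorem F_pos_first_candidate
    (n N k₂ : ℕ) (hn : 11 ≤ n) (hN : 2 * N = (n - 1) * (n + 2))
    (hk₂ : k₂ = (n + 2) / 4)
    (B C : ℝ) (hC : 0 < C)
    (hB : B = 2 * ((n : ℝ) ^ 2 - 11 * n + 4) / (3 * n * (n - 1) * (n + 2)))
    (lam : ℕ → ℝ)
    (hlam0 : ∀ i, i < k₂ → lam i = 0)
    (hlam1 : ∀ i, k₂ ≤ i → i < N → lam i = C / ((N : ℝ) - k₂)) :
    0 < B * C * ((∑ i ∈ range N, (lam i) ^ 2) - C ^ 2 / N) +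
        ((∑ i ∈ range N, (lam i) ^ 3) - C ^ 3 / (N : ℝ) ^ 2) := by
  have h10 : 10 * (n + 2) ≤ (n - 1) * (n + 2) := Nat.mul_le_mul_right _ (by omega)
  have hkN : k₂ < N := by omega
  have hk1 : 1 ≤ k₂ := by omega
  have hn' : (11 : ℝ) ≤ (n : ℝ) := by exact_mod_cast hn
  have hNk : (k₂ : ℝ) < (N : ℝ) := by exact_mod_cast hkN
  have hk' : (1 : ℝ) ≤ (k₂ : ℝ) := by exact_mod_cast hk1
  have hak : 0 < (N : ℝ) - k₂ := by linarith
  have haN : (0 : ℝ) < N := by linarith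
  -- sum computations
  have hsplit : ∀ p : ℕ, 0 < p → ∑ i ∈ range N, (lam i) ^ p
      = ((N - k₂ : ℕ) : ℝ) * (C / ((N : ℝ) - k₂)) ^ p := by
    intro p hp
    rw [range_eq_Ico, ← Finset.sum_Ico_consecutive _ (Nat.zero_le k₂) hkN.le]
    have h1 : ∑ i ∈ Finset.Ico 0 k₂, (lam i) ^ p = 0 := by
      apply Finset.sum_eq_zero
      intro i hi
      rw [hlam0 i (by simpa using (Finset.mem_Ico.mp hi).2)]
      exact zero_pow hp.ne'
    have h2 : ∑ i ∈ Finset.Ico k₂ N, (lam i) ^ p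
        = ((N - k₂ : ℕ) : ℝ) * (C / ((N : ℝ) - k₂)) ^ p := by
      rw [Finset.sum_congr rfl (fun i hi => by
        rw [hlam1 i (Finset.mem_Ico.mp hi).1 (Finset.mem_Ico.mp hi).2]),
        Finset.sum_const, Nat.card_Ico, nsmul_eq_mul]
    rw [h1, h2, zero_add]
  have hcast : ((N - k₂ : ℕ) : ℝ) = (N : ℝ) - k₂ := by
    exact_mod_cast Nat.cast_sub hkN.le
  have e2 : ∑ i ∈ range N, (lam i) ^ 2 = C ^ 2 / ((N : ℝ) - k₂) := by
    rw [hsplit 2 (by norm_num), hcast]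
    field_simp
  have e3 : ∑ i ∈ range N, (lam i) ^ 3 = C ^ 3 / ((N : ℝ) - k₂) ^ 2 := by
    rw [hsplit 3 (by norm_num), hcast]
    field_simp
  have hBpos : 0 < B := by
    rw [hB]
    apply div_pos
    · nlinarith
    · nlinarith
  have h1 : C ^ 2 / (N : ℝ) < C ^ 2 / ((N : ℝ) - k₂) :=
    div_lt_div_of_pos_left (by positivity) hak (by linarith)
  have h2 : C ^ 3 / (N : ℝ) ^ 2 < C ^ 3 / ((N : ℝ) - k₂) ^ 2 :=
    div_lt_div_of_pos_left (by positivity) (by positivity) (by nlinarith)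
  rw [e2, e3]
  have t1 : 0 < B * C * (C ^ 2 / ((N : ℝ) - k₂) - C ^ 2 / N) :=
    mul_pos (mul_pos hBpos hC) (by linarith)
  linarith
end

section
/- Let n ≥ 11, N = (n-1)(n+2)/2, k₂ = ⌊(n+2)/4⌋, B = 2(n²-11n+4)/(3n(n-1)(n+2)), and C > 0. For the configuration λ_1 = −(k₂−1)C/(N−k₂) and λ_2 = ... = λ_N = C/(N−k₂), the quantity F = B·C·(∑λ_i² − C²/N) + (∑λ_i³ − C³/N²) satisfies F = (2(N−1)k₂²C³/(N(N−k₂)²)) · ((n²−11n+4)(N−k₂) + 3n(3N − (N+1)k₂)) / (3n(n−1)(n+2)(N−k₂)) and F > 0. -/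
open Finset

lemma numpos_F_aux (n N k : ℕ) (hn : 11 ≤ n) (hN : 2 * N = (n - 1) * (n + 2))
    (hk : k = (n + 2) / 4) :
    0 < ((n:ℤ)^2 - 11*n + 4) * ((N:ℤ) - k) + 3*n*(3*N - ((N:ℤ)+1)*k) := by
  have hk1 : 4*k ≤ n+2 := by omega
  have hk2 : n + 2 ≤ 4*k + 3 := by omega
  have hNZ : 2*(N:ℤ) = ((n:ℤ)-1)*((n:ℤ)+2) := by
    have := hN; zify [show 1 ≤ n from by omega] at this; linarith
  have ha : (11:ℤ) ≤ (n:ℤ) := by exact_mod_cast hn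
  have hk1' : 4*(k:ℤ) ≤ (n:ℤ)+2 := by exact_mod_cast hk1
  have hk2' : (n:ℤ)+2 ≤ 4*(k:ℤ)+3 := by exact_mod_cast hk2
  by_cases h15 : 15 ≤ n
  · have ha15 : (15:ℤ) ≤ (n:ℤ) := by exact_mod_cast h15
    have h8 : 8 * (((n:ℤ)^2 - 11*n + 4) * ((N:ℤ) - k) + 3*n*(3*N - ((N:ℤ)+1)*k))
        = ((n:ℤ)^4 - 15*n^3 + 12*n^2 + 68*n - 48)
          + ((n:ℤ)+2-4*k) * (2*((n:ℤ)^2-11*n+4) + 3*n*(((n:ℤ)-1)*((n:ℤ)+2)+2)) := by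
      linear_combination (4*((n:ℤ)^2-11*n+4) + 36*n - 12*n*k) * hNZ
    have hprod : 0 ≤ ((n:ℤ)+2-4*k) * (2*((n:ℤ)^2-11*n+4) + 3*n*(((n:ℤ)-1)*((n:ℤ)+2)+2)) := by
      apply mul_nonneg (by linarith)
      nlinarith
    have hP : 0 < (n:ℤ)^4 - 15*n^3 + 12*n^2 + 68*n - 48 := by
      nlinarith [mul_nonneg (by linarith : (0:ℤ) ≤ (n:ℤ)-15) (by positivity : (0:ℤ) ≤ (n:ℤ)^3)]
    linarith
  · interval_cases n
    · have hNv : N = 65 := by omega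
      have hkv : k = 3 := by omega
      subst hNv hkv; norm_num
    · have hNv : N = 77 := by omega
      have hkv : k = 3 := by omega
      subst hNv hkv; norm_num
    · have hNv : N = 90 := by omega
      have hkv : k = 3 := by omega
      subst hNv hkv; norm_num
    · have hNv : N = 104 := by omega
      have hkv : k = 4 := by omega
      subst hNv hkv; norm_num

theorem F_formula_and_pos_second_candidate
    (n N k₂ : ℕ) (hn : 11 ≤ n) (hN : 2 * N = (n - 1) * (n + 2))
    (hk₂ : k₂ = (n + 2) / 4)
    (B C : ℝ) (hC : 0 < C)
    (hB : B = 2 * ((n : ℝ) ^ 2 - 11 * n + 4) / (3 * n * (n - 1) * (n + 2)))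
    (lam : ℕ → ℝ)
    (hlam0 : lam 0 = -((k₂ : ℝ) - 1) * C / ((N : ℝ) - k₂))
    (hlam1 : ∀ i, 1 ≤ i → i < N → lam i = C / ((N : ℝ) - k₂)) :
    B * C * ((∑ i ∈ range N, (lam i) ^ 2) - C ^ 2 / N) +
        ((∑ i ∈ range N, (lam i) ^ 3) - C ^ 3 / (N : ℝ) ^ 2) =
      (2 * ((N : ℝ) - 1) * k₂ ^ 2 * C ^ 3 / (N * ((N : ℝ) - k₂) ^ 2)) *
        (((n : ℝ) ^ 2 - 11 * n + 4) * ((N : ℝ) - k₂) +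
            3 * n * (3 * N - ((N : ℝ) + 1) * k₂)) /
          (3 * n * ((n : ℝ) - 1) * ((n : ℝ) + 2) * ((N : ℝ) - k₂)) ∧
    0 < B * C * ((∑ i ∈ range N, (lam i) ^ 2) - C ^ 2 / N) +
        ((∑ i ∈ range N, (lam i) ^ 3) - C ^ 3 / (N : ℝ) ^ 2) := by
  -- basic arithmetic facts
  have h130 : 130 ≤ (n - 1) * (n + 2) :=
    Nat.mul_le_mul (by omega : 10 ≤ n - 1) (by omega : 13 ≤ n + 2)
  have hNge : 65 ≤ N := by omega
  have hk3 : 3 ≤ k₂ := by omega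
  have h10 : 10 * (n + 2) ≤ (n - 1) * (n + 2) := Nat.mul_le_mul_right _ (by omega)
  have hkN : k₂ < N := by omega
  have hNr : 2 * (N:ℝ) = ((n:ℝ) - 1) * ((n:ℝ) + 2) := by
    have := hN
    zify [show 1 ≤ n from by omega] at this
    exact_mod_cast this
  have hnr : (11:ℝ) ≤ (n:ℝ) := by exact_mod_cast hn
  have hxy : (0:ℝ) < (N:ℝ) - k₂ := by
    have : (k₂:ℝ) < (N:ℝ) := by exact_mod_cast hkN
    linarith
  have hxpos : (0:ℝ) < (N:ℝ) := by
    have : (65:ℝ) ≤ (N:ℝ) := by exact_mod_cast hNge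
    linarith
  have hx1 : (1:ℝ) < (N:ℝ) := by
    have : (65:ℝ) ≤ (N:ℝ) := by exact_mod_cast hNge
    linarith
  have hyp : (0:ℝ) < (k₂:ℝ) := by
    have : (3:ℝ) ≤ (k₂:ℝ) := by exact_mod_cast hk3
    linarith
  have hn0 : (n:ℝ) ≠ 0 := by linarith
  have hn1 : (n:ℝ) - 1 ≠ 0 := by nlinarith
  have hn2 : (n:ℝ) + 2 ≠ 0 := by nlinarith
  have hxy0 : (N:ℝ) - k₂ ≠ 0 := ne_of_gt hxy
  have hx0 : (N:ℝ) ≠ 0 := ne_of_gt hxpos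
  -- sums
  have hsum : ∀ m : ℕ, ∑ i ∈ range N, (lam i) ^ m
      = lam 0 ^ m + ((N:ℝ) - 1) * (C / ((N : ℝ) - k₂)) ^ m := by
    intro m
    rw [range_eq_Ico, Finset.sum_eq_sum_Ico_succ_bot (by omega : 0 < N)]
    congr 1
    have hconst : ∀ i ∈ Ico (0+1) N, lam i ^ m = (C / ((N : ℝ) - k₂)) ^ m := by
      intro i hi
      rw [mem_Ico] at hi
      rw [hlam1 i (by omega) hi.2]
    rw [Finset.sum_congr rfl hconst, Finset.sum_const, Nat.card_Ico, nsmul_eq_mul]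
    congr 1
    push_cast [Nat.cast_sub (by omega : 1 ≤ N)]
    ring
  -- moment identities
  have e2 : (-((k₂ : ℝ) - 1) * C / ((N : ℝ) - k₂)) ^ 2
        + ((N:ℝ) - 1) * (C / ((N : ℝ) - k₂)) ^ 2 - C ^ 2 / N
      = C ^ 2 * ((N:ℝ) - 1) * (k₂:ℝ) ^ 2 / ((N:ℝ) * ((N:ℝ) - k₂) ^ 2) := by
    field_simp
    ring
  have e3 : (-((k₂ : ℝ) - 1) * C / ((N : ℝ) - k₂)) ^ 3
        + ((N:ℝ) - 1) * (C / ((N : ℝ) - k₂)) ^ 3 - C ^ 3 / (N:ℝ) ^ 2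
      = 2 * C ^ 3 * ((N:ℝ) - 1) * (k₂:ℝ) ^ 2 * (3 * (N:ℝ) - ((N:ℝ) + 1) * k₂)
          / ((N:ℝ) * ((N:ℝ) - k₂) ^ 3 * (((n:ℝ) - 1) * ((n:ℝ) + 2))) := by
    rw [show ((n:ℝ) - 1) * ((n:ℝ) + 2) = 2 * (N:ℝ) from hNr.symm]
    field_simp
    ring
  have hEq : B * C * ((∑ i ∈ range N, (lam i) ^ 2) - C ^ 2 / N) +
        ((∑ i ∈ range N, (lam i) ^ 3) - C ^ 3 / (N : ℝ) ^ 2) =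
      (2 * ((N : ℝ) - 1) * k₂ ^ 2 * C ^ 3 / (N * ((N : ℝ) - k₂) ^ 2)) *
        (((n : ℝ) ^ 2 - 11 * n + 4) * ((N : ℝ) - k₂) +
            3 * n * (3 * N - ((N : ℝ) + 1) * k₂)) /
          (3 * n * ((n : ℝ) - 1) * ((n : ℝ) + 2) * ((N : ℝ) - k₂)) := by
    rw [hsum 2, hsum 3, hlam0, e2, e3, hB]
    field_simp
  refine ⟨hEq, hEq ▸ ?_⟩
  have hnum : (0:ℝ) < ((n : ℝ) ^ 2 - 11 * n + 4) * ((N : ℝ) - k₂) +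
      3 * n * (3 * N - ((N : ℝ) + 1) * k₂) := by
    exact_mod_cast numpos_F_aux n N k₂ hn hN hk₂
  have hA : (0:ℝ) < 2 * ((N : ℝ) - 1) * k₂ ^ 2 * C ^ 3 / (N * ((N : ℝ) - k₂) ^ 2) := by
    apply div_pos
    · exact mul_pos (mul_pos (mul_pos two_pos (by linarith)) (pow_pos hyp 2)) (pow_pos hC 3)
    · exact mul_pos hxpos (pow_pos hxy 2)
  have hden : (0:ℝ) < 3 * n * ((n : ℝ) - 1) * ((n : ℝ) + 2) * ((N : ℝ) - k₂) := by
    have h1 : (0:ℝ) < 3 * (n:ℝ) * ((n:ℝ) - 1) :=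
      mul_pos (by linarith) (by linarith)
    exact mul_pos (mul_pos h1 (by linarith)) hxy
  exact div_pos (mul_pos hA hnum) hden
end
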